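/- Let 𝓕 (with the norm ‖F‖ = sup_{[0,2)}|F| + sup_{[2,∞)}|F/x|) be as above, and define 𝓕_{NS2} = {F ∈ 𝓕 : the set S = {x > 0 : F(x) = 1/x} is nonempty and F(x) < 1/x for all x ∉ S, x > 0}, and 𝓕_{NS} = {F ∈ 𝓕 : ∃ x > 0, F(x) ≥ 1/x}. Then every F ∈ 𝓕_{NS2} lies in the topological boundary of 𝓕_{NS} in 𝓕: every ε-neighbourhood of F in 𝓕 contains both a function G₋ with G₋(x) < 1/x for all x > 0 and a function G₊ ∈ 𝓕_{NS1}. -/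

import Mathlib

def MemF (F : ℝ → ℝ) : Prop :=
  ContDiff ℝ 2 F ∧ F 0 = 1/2 ∧
  (∀ x ≥ (0:ℝ), deriv F x ≤ 0) ∧
  (∀ x ≥ (0:ℝ), deriv (deriv F) x ≥ 0) ∧
  (∀ x ≥ (0:ℝ), x^2 * deriv (deriv F) x + 2*x*deriv F x - 2*F x + 1 ≥ 0) ∧
  (∀ x ≥ (0:ℝ), 2*x*deriv F x - 2*F x + 1 ≥ 0) ∧
  (∀ x ≥ (0:ℝ), -(x^2 * deriv (deriv F) x) + 2*x*deriv F x - 2*F x + 1 ≥ 0)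

noncomputable def Fnorm (F : ℝ → ℝ) : ℝ :=
  sSup ((fun x => |F x|) '' Set.Ico (0:ℝ) 2) +
  sSup ((fun x => |F x / x|) '' Set.Ici (2:ℝ))

def NS1 (F : ℝ → ℝ) : Prop :=
  ∃ x₀ > (0:ℝ), ∃ x₁ > x₀, F x₀ = 1/x₀ ∧ F x₁ > 1/x₁

def CEN (F : ℝ → ℝ) : Prop := ∀ x > (0:ℝ), F x < 1/x

def CEN1 (F : ℝ → ℝ) : Prop :=
  CEN F ∧ ∃ xH > (0:ℝ), F xH = 0 ∧ ∀ x > xH, F x < 0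

/-!
Members of `𝓕` are convex and decrease from `F 0 = 1 / 2`, and `𝓕` is convex and stable under
`F ↦ F - c x` for `c ≥ 0`. For `G₋ = F - (ε / 4) x` the difference `F - G₋` is `(ε / 4) x`; for
`G₊ = (1 - δ) F + δ / 2` it is `δ (F - 1 / 2)`, of size at most `-δ F'(0) x` by convexity; and a
difference of size at most `C x` has norm at most `3 C`. A contact point `x₀` of `F ≤ 1 / 2` with
`1 / x` satisfies `x₀ ≥ 2`, and `x₀ = 2` is impossible because convexity would keep `F ≥ 1 / 2`
beyond `2`. So `1 / x₀ < 1 / 2`, whence `G₊ x₀ > 1 / x₀`, while `G₊ 1 < 1`: `G₊` crosses `1 / x`.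
-/

open Set

namespace MemF

variable {F G : ℝ → ℝ}

lemma differentiable (hF : MemF F) : Differentiable ℝ F :=
  hF.1.differentiable (by norm_num)

lemma differentiable_deriv (hF : MemF F) : Differentiable ℝ (deriv F) := by
  have h : ContDiff ℝ (1 + 1) F := by exact_mod_cast hF.1
  exact (contDiff_succ_iff_deriv.mp h).2.2.differentiable (by norm_num)

lemma antitoneOn (hF : MemF F) : AntitoneOn F (Ici 0) :=
  antitoneOn_of_deriv_nonpos (convex_Ici 0) hF.differentiable.continuous.continuousOn
    hF.differentiable.differentiableOn fun x hx => hF.2.2.1 x (interior_subset hx)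

lemma convexOn (hF : MemF F) : ConvexOn ℝ (Ici 0) F :=
  convexOn_of_deriv2_nonneg (convex_Ici 0) hF.differentiable.continuous.continuousOn
    hF.differentiable.differentiableOn hF.differentiable_deriv.differentiableOn
    fun x hx => by simpa using hF.2.2.2.1 x (interior_subset hx)

lemma le_half (hF : MemF F) {x : ℝ} (hx : 0 ≤ x) : F x ≤ 1 / 2 :=
  hF.2.1 ▸ hF.antitoneOn self_mem_Ici hx hx

lemma abs_sub_half_le (hF : MemF F) {x : ℝ} (hx : 0 ≤ x) :
    |F x - 1 / 2| ≤ -deriv F 0 * x := by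
  rcases hx.eq_or_lt with rfl | hx
  · simp [hF.2.1]
  have htangent : deriv F 0 ≤ (F x - 1 / 2) / x := by
    simpa [slope_def_field, hF.2.1] using
      hF.convexOn.deriv_le_slope self_mem_Ici hx.le hx (hF.differentiable 0)
  rw [le_div_iff₀ hx] at htangent
  rw [abs_of_nonpos (by linarith [hF.le_half hx.le])]
  linarith

lemma const_half : MemF fun _ => 1 / 2 := by
  refine ⟨contDiff_const, rfl, ?_, ?_, ?_, ?_, ?_⟩ <;> intro x hx <;> simp

lemma convex_comb (hF : MemF F) (hG : MemF G) {a b : ℝ} (ha : 0 ≤ a) (hb : 0 ≤ b)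
    (hab : a + b = 1) : MemF fun x => a * F x + b * G x := by
  have hd : deriv (fun x => a * F x + b * G x) = fun x => a * deriv F x + b * deriv G x := by
    funext x
    exact (((hF.differentiable x).hasDerivAt.const_mul a).add
      ((hG.differentiable x).hasDerivAt.const_mul b)).deriv
  have hd2 : deriv (deriv fun x => a * F x + b * G x) =
      fun x => a * deriv (deriv F) x + b * deriv (deriv G) x := by
    rw [hd]
    funext x
    exact (((hF.differentiable_deriv x).hasDerivAt.const_mul a).add
      ((hG.differentiable_deriv x).hasDerivAt.const_mul b)).deriv
  obtain ⟨hF_smooth, hF_zero, hF₁, hF₂, hF₃, hF₄, hF₅⟩ := hF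
  obtain ⟨hG_smooth, hG_zero, hG₁, hG₂, hG₃, hG₄, hG₅⟩ := hG
  refine ⟨(contDiff_const.mul hF_smooth).add (contDiff_const.mul hG_smooth), ?_,
    fun x hx => ?_, fun x hx => ?_, fun x hx => ?_, fun x hx => ?_, fun x hx => ?_⟩
  · simp only [hF_zero, hG_zero]; linear_combination hab / 2
  · rw [hd]
    linarith [mul_nonneg ha (neg_nonneg.2 (hF₁ x hx)), mul_nonneg hb (neg_nonneg.2 (hG₁ x hx))]
  · rw [hd2]; linarith [mul_nonneg ha (hF₂ x hx), mul_nonneg hb (hG₂ x hx)]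
  · rw [hd2, hd]; linarith [mul_nonneg ha (hF₃ x hx), mul_nonneg hb (hG₃ x hx)]
  · rw [hd]; linarith [mul_nonneg ha (hF₄ x hx), mul_nonneg hb (hG₄ x hx)]
  · rw [hd2, hd]; linarith [mul_nonneg ha (hF₅ x hx), mul_nonneg hb (hG₅ x hx)]

/-- Subtracting `c x` shifts `F'` by `-c` and leaves `F''`, `x F' - F` unchanged. -/
lemma sub_const_mul (hF : MemF F) {c : ℝ} (hc : 0 ≤ c) : MemF fun x => F x - c * x := by
  have hd : deriv (fun x => F x - c * x) = fun x => deriv F x - c := by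
    funext x
    have h := (hF.differentiable x).hasDerivAt.sub ((hasDerivAt_id' x).const_mul c)
    rw [mul_one] at h
    exact h.deriv
  have hd2 : deriv (deriv fun x => F x - c * x) = deriv (deriv F) := by
    rw [hd]
    funext x
    exact deriv_sub_const c
  obtain ⟨hF_smooth, hF_zero, hF₁, hF₂, hF₃, hF₄, hF₅⟩ := hF
  refine ⟨hF_smooth.sub (contDiff_const.mul contDiff_id), by simp [hF_zero],
    fun x hx => ?_, fun x hx => ?_, fun x hx => ?_, fun x hx => ?_, fun x hx => ?_⟩
  · rw [hd]; linarith [hF₁ x hx]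
  · rw [hd2]; exact hF₂ x hx
  · rw [hd2, hd]; linarith [hF₃ x hx]
  · rw [hd]; linarith [hF₄ x hx]
  · rw [hd2, hd]; linarith [hF₅ x hx]

lemma two_lt_of_eq_inv (hF : MemF F) (hle : ∀ x > (0 : ℝ), F x ≤ 1 / x) {x₀ : ℝ}
    (hx₀ : 0 < x₀) (hroot : F x₀ = 1 / x₀) : 2 < x₀ := by
  by_contra! h
  have hx₀_eq : x₀ = 2 := by
    have := hF.le_half hx₀.le
    rw [hroot, div_le_div_iff₀ hx₀ two_pos] at this
    linarith
  subst hx₀_eq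
  -- `F 0 = F 2`, so by convexity `F` cannot decrease after `2`, contradicting `F 4 ≤ 1 / 4`.
  have hslope := hF.convexOn.slope_mono_adjacent (x := 0) (y := 2) (z := 4)
    self_mem_Ici (by norm_num : (0 : ℝ) ≤ 4) two_pos (by norm_num)
  rw [hroot, hF.2.1] at hslope
  have h4 := hle 4 (by norm_num)
  norm_num at hslope h4
  linarith

end MemF

lemma fnorm_le_of_abs_le_mul {H : ℝ → ℝ} {C : ℝ} (hC : 0 ≤ C)
    (hH : ∀ x, 0 ≤ x → |H x| ≤ C * x) : Fnorm H ≤ 3 * C := by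
  have hnear : sSup ((fun x => |H x|) '' Ico 0 2) ≤ 2 * C := by
    refine Real.sSup_le ?_ (by positivity)
    rintro _ ⟨x, hx, rfl⟩
    nlinarith [hH x hx.1, hx.2]
  have hfar : sSup ((fun x => |H x / x|) '' Ici 2) ≤ C := by
    refine Real.sSup_le ?_ hC
    rintro _ ⟨x, hx, rfl⟩
    have hx₀ : (0 : ℝ) < x := two_pos.trans_le hx
    show |H x / x| ≤ C
    rw [abs_div, abs_of_pos hx₀, div_le_iff₀ hx₀]
    exact hH x hx₀.le
  unfold Fnorm
  linarith

lemma NS1.of_lt_inv_of_inv_lt {G : ℝ → ℝ} {a b : ℝ} (ha : 0 < a) (hab : a ≤ b)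
    (hG : ContinuousOn G (Icc a b)) (hGa : G a < 1 / a) (hGb : 1 / b < G b) : NS1 G := by
  have hcont : ContinuousOn (fun x => G x - 1 / x) (Icc a b) :=
    hG.sub (continuousOn_const.div continuousOn_id fun x hx => (ha.trans_le hx.1).ne')
  obtain ⟨c, hc, hroot⟩ := intermediate_value_Ioo hab hcont
    (show (0 : ℝ) ∈ Ioo (G a - 1 / a) (G b - 1 / b) from ⟨by linarith, by linarith⟩)
  exact ⟨c, ha.trans hc.1, b, hc.2, by linarith [hroot], hGb⟩

namespace MemF

variable {F : ℝ → ℝ}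

lemma exists_lt_inv_fnorm_sub_lt (hF : MemF F) (hle : ∀ x > (0 : ℝ), F x ≤ 1 / x) {ε : ℝ}
    (hε : 0 < ε) :
    ∃ G, MemF G ∧ (∀ x > (0 : ℝ), G x < 1 / x) ∧ Fnorm (fun x => F x - G x) < ε := by
  refine ⟨fun x => F x - ε / 4 * x, hF.sub_const_mul (by positivity),
    fun x hx => by nlinarith [hle x hx], ?_⟩
  calc Fnorm (fun x => F x - (F x - ε / 4 * x)) ≤ 3 * (ε / 4) :=
        fnorm_le_of_abs_le_mul (by positivity) fun x hx => by
          rw [sub_sub_cancel, abs_of_nonneg (by positivity)]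
    _ < ε := by linarith

lemma fnorm_sub_convex_comb_half_le (hF : MemF F) {δ : ℝ} (hδ : 0 ≤ δ) :
    Fnorm (fun x => F x - ((1 - δ) * F x + δ * (1 / 2))) ≤ 3 * (-deriv F 0 * δ) :=
  fnorm_le_of_abs_le_mul (mul_nonneg (neg_nonneg.2 (hF.2.2.1 0 le_rfl)) hδ) fun x hx => by
    rw [show F x - ((1 - δ) * F x + δ * (1 / 2)) = δ * (F x - 1 / 2) by ring, abs_mul,
      abs_of_nonneg hδ]
    nlinarith [hF.abs_sub_half_le hx]

lemma exists_ns1_fnorm_sub_lt (hF : MemF F) (hle : ∀ x > (0 : ℝ), F x ≤ 1 / x) {x₀ : ℝ}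
    (hx₀ : 0 < x₀) (hroot : F x₀ = 1 / x₀) {ε : ℝ} (hε : 0 < ε) :
    ∃ G, MemF G ∧ NS1 G ∧ Fnorm (fun x => F x - G x) < ε := by
  have hx₀_two := hF.two_lt_of_eq_inv hle hx₀ hroot
  set B := -deriv F 0
  have hB : 0 ≤ B := neg_nonneg.2 (hF.2.2.1 0 le_rfl)
  set δ := ε / (3 * (B + ε)) with hδ_def
  have hδ : 0 < δ := by positivity
  have hδ_lt : δ < 1 := by
    rw [div_lt_one (by positivity)]
    linarith
  have hBδ : 3 * (B * δ) < ε := by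
    rw [hδ_def, show 3 * (B * (ε / (3 * (B + ε)))) = ε * (B / (B + ε)) by field_simp]
    exact mul_lt_of_lt_one_right hε ((div_lt_one (by positivity)).2 (by linarith))
  have hG := hF.convex_comb const_half (sub_nonneg.2 hδ_lt.le) hδ.le (sub_add_cancel 1 δ)
  have hG_one : (1 - δ) * F 1 + δ * (1 / 2) < 1 / 1 := by
    linarith [hG.le_half zero_le_one]
  have hG_x₀ : 1 / x₀ < (1 - δ) * F x₀ + δ * (1 / 2) := by
    have : 1 / x₀ < 1 / 2 := one_div_lt_one_div_of_lt two_pos hx₀_two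
    rw [hroot]
    nlinarith
  exact ⟨_, hG, NS1.of_lt_inv_of_inv_lt one_pos (by linarith)
    hG.differentiable.continuous.continuousOn hG_one hG_x₀,
    (hF.fnorm_sub_convex_comb_half_le hδ.le).trans_lt hBδ⟩

end MemF

theorem stmt_9 (F : ℝ → ℝ) (hF : MemF F)
    (hNS2 : (∃ x > (0:ℝ), F x = 1/x) ∧ ∀ x > (0:ℝ), F x ≠ 1/x → F x < 1/x)
    (ε : ℝ) (hε : 0 < ε) :
    (∃ Gm : ℝ → ℝ, MemF Gm ∧ (∀ x > (0:ℝ), Gm x < 1/x) ∧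
      Fnorm (fun x => F x - Gm x) < ε) ∧
    (∃ Gp : ℝ → ℝ, MemF Gp ∧ NS1 Gp ∧ Fnorm (fun x => F x - Gp x) < ε) := by
  obtain ⟨⟨x₀, hx₀, hroot⟩, hlt⟩ := hNS2
  have hle : ∀ x > (0 : ℝ), F x ≤ 1 / x := fun x hx =>
    (eq_or_ne (F x) (1 / x)).elim le_of_eq fun h => (hlt x hx h).le
  exact ⟨hF.exists_lt_inv_fnorm_sub_lt hle hε, hF.exists_ns1_fnorm_sub_lt hle hx₀ hroot hε⟩
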